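/- Let 0 < m₁ < m₂ < 1 and let f₁, f₂ : Λ → [0,1] be measurable with ∫_Λ f₁ dLeb = m₁, ∫_Λ f₂ dLeb = m₂, and f₁ ≤ f₂ a.e. Suppose the set 𝒰 := {u : f₁(u) = f₂(u)} is, up to a Lebesgue-null set, the disjoint union of at most countably many closed arcs 𝒰_i = [l_i, r_i]. For each i, let f̂_i : 𝒰_i → [0,1] be the density of the least concave majorant of u ↦ ∫_{[l_i,u]} f₂ dLeb on 𝒰_i (i.e. ∫_{[l_i,u]} f̂_i dLeb equals the least concave majorant at u, for all u ∈ 𝒰_i). Then the following identity holds: [∫_{𝒰ᶜ} h_{m₁}(f₁) dLeb + Σ_i ∫_{𝒰_i} h_{m₁}(f̂_i) dLeb + ∫_Λ h_{m₂}(f₂) dLeb] − ∫_Λ h_{m₁}(f₁) dLeb = ∫_{𝒰ᶜ} h_{m₂}(f₂) dLeb + Σ_i ∫_{𝒰_i} h_{m₂}(f̂_i) dLeb; in particular the left-hand side is nonnegative, i.e. S₂(f₁,f₂) ≥ ∫_Λ h_{m₁}(f₁) dLeb, where S₂(f₁,f₂) denotes the bracketed expression. -/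

import Mathlib

/-!
On each arc `𝒰ᵢ` the concave majorant touches `u ↦ ∫_{[lᵢ,u]} f₂` at the right endpoint, so
`f̂ᵢ` and `f₂` have the same mass on `𝒰ᵢ`. Since `h_{m₁} − h_{m₂}` is affine, the integral of
`h_{m₁}(g) − h_{m₂}(g)` over a set depends only on the mass of `g` there; hence replacing `f̂ᵢ`
by `f₂ = f₁` on `𝒰` changes nothing, and the identity reduces to splitting `Λ = 𝒰 ∪ 𝒰ᶜ`.
Nonnegativity of the left-hand side follows from `h_{m₂} ≥ 0`.
-/

open MeasureTheory Set
open scoped ENNReal NNReal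

noncomputable section

instance fact01 : Fact ((0:ℝ) < 1) := ⟨zero_lt_one⟩

/-- The circle `ℝ/ℤ`. -/
abbrev Circle' : Type := AddCircle (1:ℝ)

/-- The angular position of `w` in the arc starting at `u`, measured positively;
a real number in `[0,1)`. -/
noncomputable def theta (u w : Circle') : ℝ := ((AddCircle.equivIco 1 0) (w - u) : ℝ)

/-- The closed arc `[u,v]` from `u` to `v` in the positive direction. -/
def arcCC (u v : Circle') : Set Circle' := {w | theta u w ≤ theta u v}

/-- The set `𝒥(ψ,g) = {v | ∃ u, ∫_{[u,v]} (ψ − g) > 0}` associated to a pair of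
densities. -/
def JsetD (ψ g : Circle' → ℝ) : Set Circle' :=
  {v | ∃ u : Circle', 0 < ∫ w in arcCC u v, (ψ w - g w) ∂(volume : Measure Circle')}

open Classical in
/-- The collapsed density `C_g[ψ]`: equal to `g` on `𝒥(ψ,g)` and to `ψ` elsewhere. -/
noncomputable def collapseD (ψ g : Circle' → ℝ) : Circle' → ℝ :=
  fun u => if u ∈ JsetD ψ g then g u else ψ u

/-- `h_m(x) = x log(x/m) + (1-x) log((1-x)/(1-m))`, with the convention `0 log 0 = 0`. -/
noncomputable def hFun (m x : ℝ) : ℝ :=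
  x * Real.log (x / m) + (1 - x) * Real.log ((1 - x) / (1 - m))

/-- `k_m(x) = x log(x/m)`, with the convention `0 log 0 = 0`. -/
noncomputable def kFun (m x : ℝ) : ℝ := x * Real.log (x / m)

/-- The least concave majorant of `F` on `[0,L]`: the pointwise infimum of all concave
functions on `[0,L]` dominating `F` there. -/
noncomputable def lcMaj (L : ℝ) (F : ℝ → ℝ) (u : ℝ) : ℝ :=
  sInf {y : ℝ | ∃ G : ℝ → ℝ,
    ConcaveOn ℝ (Set.Icc 0 L) G ∧ (∀ x ∈ Set.Icc 0 L, F x ≤ G x) ∧ y = G u}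

open InformationTheory Real

section BinaryRelativeEntropy

variable {m m₁ m₂ : ℝ}

lemma hFun_eq_klFun (hm₀ : m ≠ 0) (hm₁ : m ≠ 1) (x : ℝ) :
    hFun m x = m * klFun (x / m) + (1 - m) * klFun ((1 - x) / (1 - m)) := by
  have : 1 - m ≠ 0 := sub_ne_zero.2 hm₁.symm
  simp only [hFun, klFun_apply]
  field_simp
  ring

lemma continuous_hFun (hm₀ : m ≠ 0) (hm₁ : m ≠ 1) : Continuous (hFun m) := by
  rw [funext (hFun_eq_klFun hm₀ hm₁)]
  fun_prop

lemma hFun_nonneg (hm : m ∈ Ioo 0 1) {x : ℝ} (hx : x ∈ Icc 0 1) : 0 ≤ hFun m x := by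
  rw [hFun_eq_klFun hm.1.ne' hm.2.ne]
  exact add_nonneg (mul_nonneg hm.1.le (klFun_nonneg (div_nonneg hx.1 hm.1.le)))
    (mul_nonneg (sub_nonneg.2 hm.2.le)
      (klFun_nonneg (div_nonneg (sub_nonneg.2 hx.2) (sub_nonneg.2 hm.2.le))))

lemma mul_log_div_sub_mul_log_div (x : ℝ) {a b : ℝ} (ha : a ≠ 0) (hb : b ≠ 0) :
    x * log (x / a) - x * log (x / b) = x * log (b / a) := by
  rcases eq_or_ne x 0 with rfl | hx
  · simp
  · rw [log_div hx ha, log_div hx hb, log_div hb ha]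
    ring

lemma hFun_sub_hFun (h₁ : m₁ ≠ 0) (h₁' : m₁ ≠ 1) (h₂ : m₂ ≠ 0) (h₂' : m₂ ≠ 1) (x : ℝ) :
    hFun m₁ x - hFun m₂ x = x * log (m₂ / m₁) + (1 - x) * log ((1 - m₂) / (1 - m₁)) := by
  have e₁ := mul_log_div_sub_mul_log_div x h₁ h₂
  have e₂ := mul_log_div_sub_mul_log_div (1 - x) (sub_ne_zero.2 h₁'.symm) (sub_ne_zero.2 h₂'.symm)
  simp only [hFun]
  linarith

end BinaryRelativeEntropy

section Integrals

variable {α : Type*} [MeasurableSpace α] {μ : Measure α} [IsFiniteMeasure μ] {m m₁ m₂ : ℝ}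

lemma integrable_of_mem_Icc {g : α → ℝ} (hg : Measurable g) (hg01 : ∀ x, g x ∈ Icc 0 1) :
    Integrable g μ :=
  .of_bound hg.aestronglyMeasurable 1 <| ae_of_all _ fun x => by
    rw [Real.norm_eq_abs, abs_le]
    constructor <;> linarith [(hg01 x).1, (hg01 x).2]

lemma exists_norm_hFun_le (hm₀ : m ≠ 0) (hm₁ : m ≠ 1) :
    ∃ C, ∀ x ∈ Icc (0 : ℝ) 1, ‖hFun m x‖ ≤ C :=
  isCompact_Icc.exists_bound_of_continuousOn (continuous_hFun hm₀ hm₁).continuousOn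

lemma integrable_hFun_comp (hm₀ : m ≠ 0) (hm₁ : m ≠ 1) {g : α → ℝ} (hg : Measurable g)
    (hg01 : ∀ x, g x ∈ Icc 0 1) : Integrable (fun x => hFun m (g x)) μ := by
  obtain ⟨C, hC⟩ := exists_norm_hFun_le hm₀ hm₁
  exact .of_bound ((continuous_hFun hm₀ hm₁).measurable.comp hg).aestronglyMeasurable C
    (ae_of_all _ fun x => hC _ (hg01 x))

lemma integral_hFun_sub_hFun_eq_of_integral_eq (h₁ : m₁ ≠ 0) (h₁' : m₁ ≠ 1) (h₂ : m₂ ≠ 0)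
    (h₂' : m₂ ≠ 1) {g g' : α → ℝ} (hg : Integrable g μ) (hg' : Integrable g' μ)
    (h : ∫ x, g x ∂μ = ∫ x, g' x ∂μ) :
    ∫ x, (hFun m₁ (g x) - hFun m₂ (g x)) ∂μ = ∫ x, (hFun m₁ (g' x) - hFun m₂ (g' x)) ∂μ := by
  set a := log (m₂ / m₁)
  set b := log ((1 - m₂) / (1 - m₁))
  have affine : ∀ f : α → ℝ, Integrable f μ →
      ∫ x, (hFun m₁ (f x) - hFun m₂ (f x)) ∂μ = b * μ.real univ + (a - b) * ∫ x, f x ∂μ := by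
    intro f hf
    have hpt : ∀ x, hFun m₁ (f x) - hFun m₂ (f x) = b + (a - b) * f x := fun x => by
      rw [hFun_sub_hFun h₁ h₁' h₂ h₂']
      ring
    simp_rw [hpt]
    rw [integral_add (integrable_const b) (hf.const_mul _), integral_const, integral_const_mul,
      smul_eq_mul, mul_comm]
  rw [affine g hg, affine g' hg', h]

lemma summable_setIntegral_of_norm_le {E : Type*} [NormedAddCommGroup E] [NormedSpace ℝ E]
    [CompleteSpace E] {ι : Type*} [Countable ι] {s : ι → Set α} (hs : ∀ i, MeasurableSet (s i))
    (hd : Pairwise (Function.onFun Disjoint s)) {g : ι → α → E} {C : ℝ} (hC : ∀ i x, ‖g i x‖ ≤ C) :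
    Summable fun i => ∫ x in s i, g i x ∂μ := by
  have hμ : Summable fun i => μ.real (s i) :=
    ENNReal.summable_toReal (measure_iUnion hd hs ▸ measure_ne_top μ _)
  exact .of_norm_bounded (hμ.mul_left C) fun i =>
    norm_setIntegral_le_of_norm_le_const (measure_lt_top _ _) fun x _ => hC i x

lemma tsum_setIntegral_hFun_sub_eq_of_setIntegral_eq (h₁ : m₁ ≠ 0) (h₁' : m₁ ≠ 1) (h₂ : m₂ ≠ 0)
    (h₂' : m₂ ≠ 1) {ι : Type*} [Countable ι] {s : ι → Set α} (hs : ∀ i, MeasurableSet (s i))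
    (hd : Pairwise (Function.onFun Disjoint s)) {g : ι → α → ℝ} (hg : ∀ i, Measurable (g i))
    (hg01 : ∀ i x, g i x ∈ Icc 0 1) {f : α → ℝ} (hf : Measurable f) (hf01 : ∀ x, f x ∈ Icc 0 1)
    (hmass : ∀ i, ∫ x in s i, g i x ∂μ = ∫ x in s i, f x ∂μ) :
    (∑' i, ∫ x in s i, hFun m₁ (g i x) ∂μ) - ∑' i, ∫ x in s i, hFun m₂ (g i x) ∂μ
      = (∫ x in ⋃ i, s i, hFun m₁ (f x) ∂μ) - ∫ x in ⋃ i, s i, hFun m₂ (f x) ∂μ := by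
  obtain ⟨C₁, hC₁⟩ := exists_norm_hFun_le h₁ h₁'
  obtain ⟨C₂, hC₂⟩ := exists_norm_hFun_le h₂ h₂'
  have hf₁ := integrable_hFun_comp (μ := μ) h₁ h₁' hf hf01
  have hf₂ := integrable_hFun_comp (μ := μ) h₂ h₂' hf hf01
  have hpiece : ∀ i, (∫ x in s i, hFun m₁ (g i x) ∂μ) - ∫ x in s i, hFun m₂ (g i x) ∂μ
      = ∫ x in s i, (hFun m₁ (f x) - hFun m₂ (f x)) ∂μ := fun i => by
    rw [← integral_sub (integrable_hFun_comp h₁ h₁' (hg i) (hg01 i))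
      (integrable_hFun_comp h₂ h₂' (hg i) (hg01 i))]
    exact integral_hFun_sub_hFun_eq_of_integral_eq h₁ h₁' h₂ h₂'
      (integrable_of_mem_Icc (hg i) (hg01 i)) (integrable_of_mem_Icc hf hf01) (hmass i)
  rw [← (summable_setIntegral_of_norm_le hs hd fun i x => hC₁ _ (hg01 i x)).tsum_sub
    (summable_setIntegral_of_norm_le hs hd fun i x => hC₂ _ (hg01 i x)), tsum_congr hpiece,
    ← integral_iUnion (f := fun x => hFun m₁ (f x) - hFun m₂ (f x)) hs hd
      (hf₁.sub hf₂).integrableOn, integral_sub hf₁.integrableOn hf₂.integrableOn]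

end Integrals

lemma concaveOn_Icc_ite_eq_right {a b c M : ℝ} (hcM : c ≤ M) :
    ConcaveOn ℝ (Icc a b) fun x => if x = b then c else M := by
  refine ⟨convex_Icc a b, fun x hx y hy p q hp hq hpq => ?_⟩
  simp only [smul_eq_mul]
  by_cases hb : p * x + q * y = b
  · -- a convex combination hits the right endpoint only through points equal to it
    have hsum : p * (b - x) + q * (b - y) = 0 := by linear_combination b * hpq - hb
    have hpx₀ := mul_nonneg hp (sub_nonneg.2 hx.2)
    have hqy₀ := mul_nonneg hq (sub_nonneg.2 hy.2)
    have hpx : p * (b - x) = 0 := by linarith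
    have hqy : q * (b - y) = 0 := by linarith
    have hpx' : p * (if x = b then c else M) = p * c := by
      rcases mul_eq_zero.1 hpx with h | h
      · simp [h]
      · simp [(sub_eq_zero.1 h).symm]
    have hqy' : q * (if y = b then c else M) = q * c := by
      rcases mul_eq_zero.1 hqy with h | h
      · simp [h]
      · simp [(sub_eq_zero.1 h).symm]
    rw [if_pos hb, hpx', hqy', ← add_mul, hpq, one_mul]
  · have hle : ∀ z : ℝ, (if z = b then c else M) ≤ M := fun z => by split_ifs <;> linarith
    rw [if_neg hb]
    calc p * (if x = b then c else M) + q * (if y = b then c else M) ≤ p * M + q * M :=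
          add_le_add (mul_le_mul_of_nonneg_left (hle x) hp) (mul_le_mul_of_nonneg_left (hle y) hq)
      _ = M := by rw [← add_mul, hpq, one_mul]

lemma lcMaj_self_right {L : ℝ} (hL : 0 ≤ L) {F : ℝ → ℝ} (hF : BddAbove (F '' Icc 0 L)) :
    lcMaj L F L = F L := by
  obtain ⟨M, hM⟩ := hF
  have hLmem : L ∈ Icc 0 L := right_mem_Icc.2 hL
  refine IsLeast.csInf_eq ⟨⟨fun x => if x = L then F L else M,
    concaveOn_Icc_ite_eq_right (hM (mem_image_of_mem F hLmem)), fun x hx => ?_, by simp⟩, ?_⟩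
  · dsimp only
    split_ifs with h
    · rw [h]
    · exact hM (mem_image_of_mem F hx)
  · rintro y ⟨G, -, hG, rfl⟩
    exact hG L hLmem

lemma theta_nonneg (u v : Circle') : 0 ≤ theta u v := ((AddCircle.equivIco 1 0) (v - u)).2.1

lemma add_theta (u v : Circle') : u + (theta u v : Circle') = v := by
  have : ((theta u v : ℝ) : Circle') = v - u := (AddCircle.equivIco 1 0).symm_apply_apply _
  rw [this]
  abel

lemma measurable_theta (u : Circle') : Measurable (theta u) :=
  (measurable_subtype_coe.comp (AddCircle.measurableEquivIco (T := 1) 0).measurable).comp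
    (measurable_id.sub_const u)

lemma measurableSet_arcCC (u v : Circle') : MeasurableSet (arcCC u v) :=
  measurable_theta u measurableSet_Iic

lemma setIntegral_arcCC_eq_of_lcMaj {f g : Circle' → ℝ} (hf : Integrable f) {u v : Circle'}
    (hg : ∀ t ∈ Icc 0 (theta u v), ∫ w in arcCC u (u + t), g w
      = lcMaj (theta u v) (fun s => ∫ w in arcCC u (u + s), f w) t) :
    ∫ w in arcCC u v, g w = ∫ w in arcCC u v, f w := by
  have hbdd : BddAbove ((fun s : ℝ => ∫ w in arcCC u (u + s), f w) '' Icc 0 (theta u v)) := by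
    refine ⟨∫ w, ‖f w‖, ?_⟩
    rintro _ ⟨s, -, rfl⟩
    exact (le_norm_self _).trans <| (norm_integral_le_integral_norm _).trans <|
      setIntegral_le_integral hf.norm (ae_of_all _ fun _ => norm_nonneg _)
  have h := hg _ (right_mem_Icc.2 (theta_nonneg u v))
  rwa [lcMaj_self_right (theta_nonneg u v) hbdd, add_theta] at h

theorem stmt18_general (m₁ m₂ : ℝ) (hm₁pos : 0 < m₁) (hm₁₂ : m₁ < m₂) (hm₂lt : m₂ < 1)
    (f₁ f₂ : Circle' → ℝ) (hf₁meas : Measurable f₁) (hf₂meas : Measurable f₂)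
    (hf₁range : ∀ u, f₁ u ∈ Set.Icc (0:ℝ) 1) (hf₂range : ∀ u, f₂ u ∈ Set.Icc (0:ℝ) 1)
    (ι : Type) [Countable ι] (l r : ι → Circle')
    (hdisj : Pairwise (Function.onFun Disjoint (fun i => arcCC (l i) (r i))))
    (hU : {u | f₁ u = f₂ u} =ᵐ[(volume : Measure Circle')] ⋃ i, arcCC (l i) (r i))
    (fhat : ι → Circle' → ℝ)
    (hfhatmeas : ∀ i, Measurable (fhat i))
    (hfhatrange : ∀ i u, fhat i u ∈ Set.Icc (0:ℝ) 1)
    (hfhat : ∀ i, ∀ t ∈ Set.Icc (0:ℝ) (theta (l i) (r i)),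
      (∫ w in arcCC (l i) ((l i) + (t : Circle')), fhat i w ∂(volume : Measure Circle'))
        = lcMaj (theta (l i) (r i))
            (fun s => ∫ w in arcCC (l i) ((l i) + (s : Circle')), f₂ w
              ∂(volume : Measure Circle')) t) :
    (((∫ u in (⋃ i, arcCC (l i) (r i))ᶜ, hFun m₁ (f₁ u) ∂(volume : Measure Circle'))
        + (∑' i, ∫ u in arcCC (l i) (r i), hFun m₁ (fhat i u) ∂(volume : Measure Circle'))
        + ∫ u, hFun m₂ (f₂ u) ∂(volume : Measure Circle'))
      - ∫ u, hFun m₁ (f₁ u) ∂(volume : Measure Circle'))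
      = (∫ u in (⋃ i, arcCC (l i) (r i))ᶜ, hFun m₂ (f₂ u) ∂(volume : Measure Circle'))
        + ∑' i, ∫ u in arcCC (l i) (r i), hFun m₂ (fhat i u) ∂(volume : Measure Circle')
    ∧ (∫ u, hFun m₁ (f₁ u) ∂(volume : Measure Circle'))
        ≤ (∫ u in (⋃ i, arcCC (l i) (r i))ᶜ, hFun m₁ (f₁ u) ∂(volume : Measure Circle'))
          + (∑' i, ∫ u in arcCC (l i) (r i), hFun m₁ (fhat i u) ∂(volume : Measure Circle'))
          + ∫ u, hFun m₂ (f₂ u) ∂(volume : Measure Circle') := by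
  have hm₂ : m₂ ∈ Ioo 0 1 := ⟨hm₁pos.trans hm₁₂, hm₂lt⟩
  have h₁ := hm₁pos.ne'; have h₁' := (hm₁₂.trans hm₂lt).ne
  have h₂ := hm₂.1.ne'; have h₂' := hm₂lt.ne
  have hs := fun i => measurableSet_arcCC (l i) (r i)
  have hUmeas := MeasurableSet.iUnion hs
  have hf₂int : Integrable f₂ := integrable_of_mem_Icc hf₂meas hf₂range
  have hsum := tsum_setIntegral_hFun_sub_eq_of_setIntegral_eq (μ := volume) h₁ h₁' h₂ h₂' hs
    hdisj hfhatmeas hfhatrange hf₂meas hf₂range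
    fun i => setIntegral_arcCC_eq_of_lcMaj hf₂int (hfhat i)
  have hU₁ : ∫ u in ⋃ i, arcCC (l i) (r i), hFun m₁ (f₁ u)
      = ∫ u in ⋃ i, arcCC (l i) (r i), hFun m₁ (f₂ u) := by
    refine setIntegral_congr_ae hUmeas ?_
    filter_upwards [Filter.eventuallyEq_set.mp hU] with u hu huU
    rw [hu.mpr huU]
  have hsplit₁ := integral_add_compl hUmeas
    (integrable_hFun_comp (μ := volume) h₁ h₁' hf₁meas hf₁range)
  have hsplit₂ := integral_add_compl hUmeas
    (integrable_hFun_comp (μ := volume) h₂ h₂' hf₂meas hf₂range)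
  have hcompl : 0 ≤ ∫ u in (⋃ i, arcCC (l i) (r i))ᶜ, hFun m₂ (f₂ u) :=
    setIntegral_nonneg hUmeas.compl fun u _ => hFun_nonneg hm₂ (hf₂range u)
  have hfhat : 0 ≤ ∑' i, ∫ u in arcCC (l i) (r i), hFun m₂ (fhat i u) :=
    tsum_nonneg fun i => setIntegral_nonneg (hs i) fun u _ => hFun_nonneg hm₂ (hfhatrange i u)
  exact ⟨by linarith, by linarith⟩

/-- the identity
`S₂(f₁,f₂) − ∫ h_{m₁}(f₁) = ∫_{𝒰ᶜ} h_{m₂}(f₂) + Σᵢ ∫_{𝒰ᵢ} h_{m₂}(f̂ᵢ)`, where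
`S₂(f₁,f₂) = ∫_{𝒰ᶜ} h_{m₁}(f₁) + Σᵢ ∫_{𝒰ᵢ} h_{m₁}(f̂ᵢ) + ∫ h_{m₂}(f₂)`;
in particular `S₂(f₁,f₂) ≥ ∫ h_{m₁}(f₁)`. -/
theorem stmt18 (m₁ m₂ : ℝ) (hm₁pos : 0 < m₁) (hm₁₂ : m₁ < m₂) (hm₂lt : m₂ < 1)
    (f₁ f₂ : Circle' → ℝ) (hf₁meas : Measurable f₁) (hf₂meas : Measurable f₂)
    (hf₁range : ∀ u, f₁ u ∈ Set.Icc (0:ℝ) 1) (hf₂range : ∀ u, f₂ u ∈ Set.Icc (0:ℝ) 1)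
    (hm₁ : (∫ u, f₁ u ∂(volume : Measure Circle')) = m₁)
    (hm₂ : (∫ u, f₂ u ∂(volume : Measure Circle')) = m₂)
    (hle : ∀ᵐ u ∂(volume : Measure Circle'), f₁ u ≤ f₂ u)
    (ι : Type) [Countable ι] (l r : ι → Circle')
    (hdisj : Pairwise (Function.onFun Disjoint (fun i => arcCC (l i) (r i))))
    (hU : {u | f₁ u = f₂ u} =ᵐ[(volume : Measure Circle')] ⋃ i, arcCC (l i) (r i))
    (fhat : ι → Circle' → ℝ)
    (hfhatmeas : ∀ i, Measurable (fhat i))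
    (hfhatrange : ∀ i u, fhat i u ∈ Set.Icc (0:ℝ) 1)
    (hfhat : ∀ i, ∀ t ∈ Set.Icc (0:ℝ) (theta (l i) (r i)),
      (∫ w in arcCC (l i) ((l i) + (t : Circle')), fhat i w ∂(volume : Measure Circle'))
        = lcMaj (theta (l i) (r i))
            (fun s => ∫ w in arcCC (l i) ((l i) + (s : Circle')), f₂ w
              ∂(volume : Measure Circle')) t) :
    (((∫ u in (⋃ i, arcCC (l i) (r i))ᶜ, hFun m₁ (f₁ u) ∂(volume : Measure Circle'))
        + (∑' i, ∫ u in arcCC (l i) (r i), hFun m₁ (fhat i u) ∂(volume : Measure Circle'))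
        + ∫ u, hFun m₂ (f₂ u) ∂(volume : Measure Circle'))
      - ∫ u, hFun m₁ (f₁ u) ∂(volume : Measure Circle'))
      = (∫ u in (⋃ i, arcCC (l i) (r i))ᶜ, hFun m₂ (f₂ u) ∂(volume : Measure Circle'))
        + ∑' i, ∫ u in arcCC (l i) (r i), hFun m₂ (fhat i u) ∂(volume : Measure Circle')
    ∧ (∫ u, hFun m₁ (f₁ u) ∂(volume : Measure Circle'))
        ≤ (∫ u in (⋃ i, arcCC (l i) (r i))ᶜ, hFun m₁ (f₁ u) ∂(volume : Measure Circle'))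
          + (∑' i, ∫ u in arcCC (l i) (r i), hFun m₁ (fhat i u) ∂(volume : Measure Circle'))
          + ∫ u, hFun m₂ (f₂ u) ∂(volume : Measure Circle') :=
  stmt18_general m₁ m₂ hm₁pos hm₁₂ hm₂lt f₁ f₂ hf₁meas hf₂meas hf₁range hf₂range ι l r hdisj hU fhat
    hfhatmeas hfhatrange hfhat
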